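/- For every n ≥ 1, ν₁, ν₂ ≥ 0 and x ≥ 0, the first central moment of the Stancu-type operator satisfies L_n^{(ν₁,ν₂)}(s−x; x) = (A₂'(nx·h(1))·n / (A₂(nx·h(1))·(n+ν₂)) − 1)·x + (A₁'(h(1))/A₁(h(1)) + ν₁)·1/(n+ν₂). -/

import Mathlib

/-- Data for generalized Brenke polynomials: analytic functions `A₁, A₂, h`
given by power series on `{t : |t| < R}` (`R > 1`), with `A₁, A₂ > 0` on `ℝ`,
`h'(1) = 1`, and polynomials `p k` satisfying the generating relation
`A₁(h(t)) · A₂(x · h(t)) = ∑ₖ p k x · tᵏ` with `p k x ≥ 0` for `x ≥ 0`. -/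
structure BrenkeData where
  R : ℝ
  A₁ : ℝ → ℝ
  A₂ : ℝ → ℝ
  h : ℝ → ℝ
  a₁ : ℕ → ℝ
  a₂ : ℕ → ℝ
  c : ℕ → ℝ
  p : ℕ → ℝ → ℝ
  hR : 1 < R
  ha₁ : a₁ 0 ≠ 0
  ha₂ : ∀ k, a₂ k ≠ 0
  hc0 : c 0 = 0
  hc1 : c 1 ≠ 0
  hA₁ : ∀ t : ℝ, |t| < R → HasSum (fun k => a₁ k * t ^ k) (A₁ t)
  hA₂ : ∀ t : ℝ, |t| < R → HasSum (fun k => a₂ k * t ^ k) (A₂ t)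
  hh : ∀ t : ℝ, |t| < R → HasSum (fun k => c k * t ^ k) (h t)
  hA₁pos : ∀ t : ℝ, 0 < A₁ t
  hA₂pos : ∀ t : ℝ, 0 < A₂ t
  hh1 : deriv h 1 = 1
  hgen : ∀ x t : ℝ, |t| < R → HasSum (fun k => p k x * t ^ k) (A₁ (h t) * A₂ (x * h t))
  hpos : ∀ (k : ℕ) (x : ℝ), 0 ≤ x → 0 ≤ p k x

/-- The Stancu type operator `L_n^{(ν₁,ν₂)}` including generalized Brenke polynomials. -/
noncomputable def stancuL (B : BrenkeData) (ν₁ ν₂ : ℝ) (n : ℕ) (f : ℝ → ℝ) (x : ℝ) : ℝ :=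
  (B.A₁ (B.h 1) * B.A₂ (n * x * B.h 1))⁻¹ *
    ∑' k : ℕ, B.p k (n * x) * f ((k + ν₁) / (n + ν₂))

/-!
Evaluate the generating relation `∑ₖ pₖ(y) tᵏ = A₁(h t) A₂(y h t)` and its termwise derivative
at `t = 1`: this gives `∑ₖ pₖ(y) = A₁(h 1) A₂(y h 1)` and
`∑ₖ k pₖ(y) = A₁'(h 1) A₂(y h 1) + A₁(h 1) A₂'(y h 1) y`, and the first central moment is an
affine combination of the two. The point `h 1` may lie outside the disc where `A₁` is given by its
series, so differentiability of `A₁` there comes from that of `A₁ ∘ h` (the generating function at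
`y = 0`) through a local inverse of `h`, which exists since `h'(1) = 1`; likewise for `A₂` at
`y h 1`.
-/

open FormalMultilinearSeries

theorem hasFPowerSeriesOnBall_ofScalars_of_hasSum_pow {a : ℕ → ℝ} {f : ℝ → ℝ} {R : ℝ}
    (hR : 0 < R) (hf : ∀ t : ℝ, |t| < R → HasSum (fun k => a k * t ^ k) (f t)) :
    HasFPowerSeriesOnBall f (ofScalars ℝ a) 0 (ENNReal.ofReal R) where
  r_le := by
    refine ENNReal.le_of_forall_nnreal_lt fun r hr => le_radius_of_summable _ ?_
    have hrR : (r : ℝ) < R := by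
      rwa [← ENNReal.ofReal_coe_nnreal, ENNReal.ofReal_lt_ofReal_iff hR] at hr
    simpa [abs_mul] using (hf r (by rwa [NNReal.abs_eq])).summable.abs
  r_pos := ENNReal.ofReal_pos.2 hR
  hasSum {y} hy := by
    rw [Metric.eball_ofReal, mem_ball_zero_iff, Real.norm_eq_abs] at hy
    simpa [ofScalars_apply_eq, mul_comm] using hf y hy

theorem analyticAt_of_hasSum_pow {a : ℕ → ℝ} {f : ℝ → ℝ} {R z : ℝ}
    (hf : ∀ t : ℝ, |t| < R → HasSum (fun k => a k * t ^ k) (f t)) (hz : |z| < R) :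
    AnalyticAt ℝ f z :=
  (hasFPowerSeriesOnBall_ofScalars_of_hasSum_pow ((abs_nonneg z).trans_lt hz) hf).analyticAt_of_mem
    (by rwa [Metric.eball_ofReal, mem_ball_zero_iff, Real.norm_eq_abs])

theorem hasSum_natCast_mul_pow_of_hasSum_pow {a : ℕ → ℝ} {f : ℝ → ℝ} {R z : ℝ}
    (hf : ∀ t : ℝ, |t| < R → HasSum (fun k => a k * t ^ k) (f t)) (hz : |z| < R) :
    HasSum (fun k => k * a k * z ^ k) (z * deriv f z) := by
  have hseries := (hasFPowerSeriesOnBall_ofScalars_of_hasSum_pow ((abs_nonneg z).trans_lt hz)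
    hf).fderiv.hasSum (y := z) (by rwa [Metric.eball_ofReal, mem_ball_zero_iff, Real.norm_eq_abs])
  have hshift := hseries.mapL (ContinuousLinearMap.apply ℝ ℝ z)
  simp only [ContinuousLinearMap.apply_apply, derivSeries_apply_diag, ofScalars_apply_eq,
    zero_add, fderiv_eq_smul_deriv, smul_eq_mul] at hshift
  rw [← hasSum_nat_add_iff' 1]
  simpa [mul_comm, mul_assoc, mul_left_comm] using hshift

theorem HasStrictDerivAt.differentiableAt_of_comp {𝕜 F : Type*} [NontriviallyNormedField 𝕜]
    [CompleteSpace 𝕜] [NormedAddCommGroup F] [NormedSpace 𝕜 F] {ψ : 𝕜 → 𝕜} {ψ' a : 𝕜}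
    {g : 𝕜 → F} (hψ : HasStrictDerivAt ψ ψ' a) (hψ' : ψ' ≠ 0)
    (hg : DifferentiableAt 𝕜 (g ∘ ψ) a) : DifferentiableAt 𝕜 g (ψ a) := by
  set φ := hψ.localInverse ψ ψ' a hψ'
  have hφ : φ (ψ a) = a := HasStrictFDerivAt.localInverse_apply_image _
  have hcomp : DifferentiableAt 𝕜 (g ∘ ψ ∘ φ) (ψ a) :=
    (hφ ▸ hg).comp (ψ a) (hψ.to_localInverse hψ').hasDerivAt.differentiableAt
  exact hcomp.congr_of_eventuallyEq
    ((hψ.eventually_right_inverse hψ').mono fun y hy => congrArg g hy.symm)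

namespace BrenkeData

variable (B : BrenkeData)

theorem abs_one_lt_R : |(1 : ℝ)| < B.R := by
  rw [abs_one]; exact B.hR

theorem hasStrictDerivAt_h_one : HasStrictDerivAt B.h 1 1 :=
  (analyticAt_of_hasSum_pow B.hh B.abs_one_lt_R).hasStrictDerivAt.congr_deriv B.hh1

theorem differentiableAt_A₁_h_one : DifferentiableAt ℝ B.A₁ (B.h 1) := by
  have hgen : DifferentiableAt ℝ (fun t => B.A₁ (B.h t) * B.A₂ (0 * B.h t)) 1 :=
    (analyticAt_of_hasSum_pow (B.hgen 0) B.abs_one_lt_R).differentiableAt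
  have hcomp : B.A₁ ∘ B.h = fun t => B.A₁ (B.h t) * B.A₂ (0 * B.h t) * (B.A₂ 0)⁻¹ := by
    funext t
    simp [(B.hA₂pos 0).ne']
  exact B.hasStrictDerivAt_h_one.differentiableAt_of_comp one_ne_zero (hcomp ▸ hgen.mul_const _)

theorem differentiableAt_A₂_mul_h_one (y : ℝ) : DifferentiableAt ℝ B.A₂ (y * B.h 1) := by
  rcases eq_or_ne y 0 with rfl | hy
  · rw [zero_mul]
    exact (analyticAt_of_hasSum_pow B.hA₂ (by simpa using B.hR.trans' one_pos)).differentiableAt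
  have hgen : DifferentiableAt ℝ (fun t => B.A₁ (B.h t) * B.A₂ (y * B.h t)) 1 :=
    (analyticAt_of_hasSum_pow (B.hgen y) B.abs_one_lt_R).differentiableAt
  have hA₁h : DifferentiableAt ℝ (fun t => B.A₁ (B.h t)) 1 :=
    B.differentiableAt_A₁_h_one.comp 1 B.hasStrictDerivAt_h_one.hasDerivAt.differentiableAt
  have hcomp : (B.A₂ ∘ fun t => y * B.h t) =
      fun t => B.A₁ (B.h t) * B.A₂ (y * B.h t) / B.A₁ (B.h t) := by
    funext t
    simp [(B.hA₁pos _).ne']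
  simpa using (B.hasStrictDerivAt_h_one.const_mul y).differentiableAt_of_comp (by simpa)
    (hcomp ▸ hgen.div hA₁h (B.hA₁pos _).ne')

theorem hasSum_p (y : ℝ) : HasSum (fun k => B.p k y) (B.A₁ (B.h 1) * B.A₂ (y * B.h 1)) := by
  simpa using B.hgen y 1 B.abs_one_lt_R

theorem hasSum_natCast_mul_p (y : ℝ) :
    HasSum (fun k => k * B.p k y)
      (deriv B.A₁ (B.h 1) * B.A₂ (y * B.h 1) + B.A₁ (B.h 1) * (deriv B.A₂ (y * B.h 1) * y)) := by
  have hderiv : HasDerivAt (fun t => B.A₁ (B.h t) * B.A₂ (y * B.h t))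
      (deriv B.A₁ (B.h 1) * B.A₂ (y * B.h 1) + B.A₁ (B.h 1) * (deriv B.A₂ (y * B.h 1) * y)) 1 := by
    have hh := B.hasStrictDerivAt_h_one.hasDerivAt
    have hA₁h : HasDerivAt (fun t => B.A₁ (B.h t)) (deriv B.A₁ (B.h 1)) 1 := by
      simpa [Function.comp_def] using B.differentiableAt_A₁_h_one.hasDerivAt.comp 1 hh
    have hA₂h : HasDerivAt (fun t => B.A₂ (y * B.h t)) (deriv B.A₂ (y * B.h 1) * y) 1 := by
      simpa [Function.comp_def] using
        (B.differentiableAt_A₂_mul_h_one y).hasDerivAt.comp 1 (hh.const_mul y)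
    exact hA₁h.mul hA₂h
  simpa [hderiv.deriv] using hasSum_natCast_mul_pow_of_hasSum_pow (B.hgen y) B.abs_one_lt_R

end BrenkeData

theorem stancuL_central_one_general (B : BrenkeData) (ν₁ ν₂ : ℝ) (n : ℕ) (x : ℝ) :
    stancuL B ν₁ ν₂ n (fun s => s - x) x =
      (deriv B.A₂ (n * x * B.h 1) * n / (B.A₂ (n * x * B.h 1) * (n + ν₂)) - 1) * x
        + (deriv B.A₁ (B.h 1) / B.A₁ (B.h 1) + ν₁) * (1 / (n + ν₂)) := by
  set c := ((n : ℝ) + ν₂)⁻¹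
  have hsum : HasSum (fun k : ℕ => B.p k (n * x) * ((k + ν₁) / (n + ν₂) - x))
      (c * (deriv B.A₁ (B.h 1) * B.A₂ (n * x * B.h 1)
          + B.A₁ (B.h 1) * (deriv B.A₂ (n * x * B.h 1) * (n * x)))
        + (ν₁ * c - x) * (B.A₁ (B.h 1) * B.A₂ (n * x * B.h 1))) := by
    have hterm : (fun k : ℕ => B.p k (n * x) * ((k + ν₁) / (n + ν₂) - x)) =
        fun k => c * (k * B.p k (n * x)) + (ν₁ * c - x) * B.p k (n * x) := by
      funext k
      simp only [c, div_eq_mul_inv]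
      ring
    rw [hterm]
    exact ((B.hasSum_natCast_mul_p (n * x)).mul_left c).add
      ((B.hasSum_p (n * x)).mul_left (ν₁ * c - x))
  have hA₁ := (B.hA₁pos (B.h 1)).ne'
  have hA₂ := (B.hA₂pos (n * x * B.h 1)).ne'
  rw [stancuL, hsum.tsum_eq, div_eq_mul_inv, mul_inv, one_div]
  field_simp
  ring

/-- First central moment `L_n^{(ν₁,ν₂)}(s−x; x)`. -/
theorem stancuL_central_one (B : BrenkeData) (ν₁ ν₂ : ℝ) (hν₁ : 0 ≤ ν₁) (hν₂ : 0 ≤ ν₂)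
    (n : ℕ) (hn : 1 ≤ n) (x : ℝ) (hx : 0 ≤ x) :
    stancuL B ν₁ ν₂ n (fun s => s - x) x =
      (deriv B.A₂ (n * x * B.h 1) * n / (B.A₂ (n * x * B.h 1) * (n + ν₂)) - 1) * x
        + (deriv B.A₁ (B.h 1) / B.A₁ (B.h 1) + ν₁) * (1 / (n + ν₂)) :=
  stancuL_central_one_general B ν₁ ν₂ n x
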